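/- Let A be an arithmetical algebra. Then the following are equivalent: A has the FCLP; A has the CBLP; A is FC-normal; A is B-normal. -/

import Mathlib

/-! Universal-algebra framework: algebras over a signature, congruences,
factor congruences, lifting properties. -/

structure Signature where
  ops : Type
  arity : ops → ℕ

structure Alg (σ : Signature) where
  carrier : Type
  interp : ∀ f : σ.ops, (Fin (σ.arity f) → carrier) → carrier

namespace Alg

variable {σ : Signature}

/-- A congruence: an equivalence relation compatible with all operations. -/
def IsCon (A : Alg σ) (r : A.carrier → A.carrier → Prop) : Prop :=
  Equivalence r ∧
    ∀ (f : σ.ops) (x y : Fin (σ.arity f) → A.carrier),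
      (∀ i, r (x i) (y i)) → r (A.interp f x) (A.interp f y)

/-- The least congruence `Δ_A`. -/
def delta (A : Alg σ) : A.carrier → A.carrier → Prop := fun a b => a = b

/-- The greatest congruence `∇_A = A²`. -/
def nabla (A : Alg σ) : A.carrier → A.carrier → Prop := fun _ _ => True

/-- Meet (intersection) of congruences. -/
def conMeet (A : Alg σ) (r s : A.carrier → A.carrier → Prop) :
    A.carrier → A.carrier → Prop := fun a b => r a b ∧ s a b

/-- Join of congruences: the least congruence containing both. -/
def conJoin (A : Alg σ) (r s : A.carrier → A.carrier → Prop) :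
    A.carrier → A.carrier → Prop := fun a b =>
  ∀ t, A.IsCon t → (∀ x y, r x y → t x y) → (∀ x y, s x y → t x y) → t a b

/-- The congruence generated by a set of pairs. -/
def conGen (A : Alg σ) (X : Set (A.carrier × A.carrier)) :
    A.carrier → A.carrier → Prop := fun a b =>
  ∀ t, A.IsCon t → (∀ p ∈ X, t p.1 p.2) → t a b

/-- Composition of relations: `(a,b) ∈ comp r s` iff `(a,x) ∈ s` and `(x,b) ∈ r`
for some `x`. -/
def comp (A : Alg σ) (r s : A.carrier → A.carrier → Prop) :
    A.carrier → A.carrier → Prop := fun a b => ∃ x, s a x ∧ r x b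

/-- Factor congruences: congruences `φ` having a congruence `φ*` with
`φ ∨ φ* = ∇`, `φ ∩ φ* = Δ` and `φ ∘ φ* = φ* ∘ φ`. -/
def IsFC (A : Alg σ) (φ : A.carrier → A.carrier → Prop) : Prop :=
  A.IsCon φ ∧ ∃ ψ, A.IsCon ψ ∧ A.conJoin φ ψ = A.nabla ∧
    A.conMeet φ ψ = A.delta ∧ A.comp φ ψ = A.comp ψ φ

/-- Boolean congruences: complemented elements of the lattice `Con(A)`. -/
def IsBooleanCon (A : Alg σ) (φ : A.carrier → A.carrier → Prop) : Prop :=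
  A.IsCon φ ∧ ∃ ψ, A.IsCon ψ ∧ A.conJoin φ ψ = A.nabla ∧ A.conMeet φ ψ = A.delta

/-- `A` is congruence-distributive iff the lattice `Con(A)` is distributive. -/
def CongDistrib (A : Alg σ) : Prop :=
  ∀ r s t, A.IsCon r → A.IsCon s → A.IsCon t →
    A.conMeet r (A.conJoin s t) = A.conJoin (A.conMeet r s) (A.conMeet r t)

/-- `A` is congruence-permutable iff all congruences permute under composition. -/
def CongPermutable (A : Alg σ) : Prop :=
  ∀ r s, A.IsCon r → A.IsCon s → A.comp r s = A.comp s r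

/-- Arithmetical = congruence-distributive + congruence-permutable. -/
def Arithmetical (A : Alg σ) : Prop := A.CongDistrib ∧ A.CongPermutable

/-- The quotient algebra `A/θ`. -/
noncomputable def quotAlg (A : Alg σ) (θ : A.carrier → A.carrier → Prop) :
    Alg σ where
  carrier := Quot θ
  interp f x := Quot.mk θ (A.interp f fun i => (x i).out)

/-- The image `α/θ = {(a/θ, b/θ) : (a,b) ∈ α}` of a relation in the quotient. -/
def quotRel (A : Alg σ) (θ α : A.carrier → A.carrier → Prop) :
    Quot θ → Quot θ → Prop := fun x y =>
  ∃ a b, x = Quot.mk θ a ∧ y = Quot.mk θ b ∧ α a b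

/-- `θ` has the Factor Congruence Lifting Property: the Boolean morphism
`FC(θ) : FC(A) → FC(A/θ)`, `ψ ↦ (ψ ∨ θ)/θ`, is surjective. -/
def HasFCLP (A : Alg σ) (θ : A.carrier → A.carrier → Prop) : Prop :=
  ∀ γ, (A.quotAlg θ).IsFC γ →
    ∃ ψ, A.IsFC ψ ∧ A.quotRel θ (A.conJoin ψ θ) = γ

/-- `θ` has the Congruence Boolean Lifting Property: the Boolean morphism
`B(Con(A)) → B(Con(A/θ))`, `ψ ↦ (ψ ∨ θ)/θ`, is surjective. -/
def HasCBLP (A : Alg σ) (θ : A.carrier → A.carrier → Prop) : Prop :=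
  ∀ γ, (A.quotAlg θ).IsBooleanCon γ →
    ∃ ψ, A.IsBooleanCon ψ ∧ A.quotRel θ (A.conJoin ψ θ) = γ

/-- `A` has FCLP iff every congruence of `A` has FCLP. -/
def AlgFCLP (A : Alg σ) : Prop := ∀ θ, A.IsCon θ → A.HasFCLP θ

/-- `A` has CBLP iff every congruence of `A` has CBLP. -/
def AlgCBLP (A : Alg σ) : Prop := ∀ θ, A.IsCon θ → A.HasCBLP θ

/-- FC-normality. -/
def FCNormal (A : Alg σ) : Prop :=
  ∀ φ ψ, A.IsCon φ → A.IsCon ψ → A.comp φ ψ = A.nabla →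
    ∃ α β, A.IsFC α ∧ A.IsFC β ∧ A.conMeet α β = A.delta ∧
      A.comp φ α = A.nabla ∧ A.comp ψ β = A.nabla

/-- B-normality. -/
def BNormal (A : Alg σ) : Prop :=
  ∀ φ ψ, A.IsCon φ → A.IsCon ψ → A.conJoin φ ψ = A.nabla →
    ∃ α β, A.IsBooleanCon α ∧ A.IsBooleanCon β ∧ A.conMeet α β = A.delta ∧
      A.conJoin φ α = A.nabla ∧ A.conJoin ψ β = A.nabla

/-- Isomorphism of algebras. -/
def Iso (A B : Alg σ) : Prop :=
  ∃ e : A.carrier ≃ B.carrier,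
    ∀ (f : σ.ops) (x : Fin (σ.arity f) → A.carrier),
      e (A.interp f x) = B.interp f fun i => e (x i)

/-- Direct product of a finite family of algebras. -/
def prodAlg {n : ℕ} (B : Fin n → Alg σ) : Alg σ where
  carrier := ∀ i, (B i).carrier
  interp f x := fun i => (B i).interp f fun j => x j i

/-- The product congruence `θ₁ × … × θₙ`. -/
def prodRel {n : ℕ} (B : Fin n → Alg σ)
    (θ : ∀ i, (B i).carrier → (B i).carrier → Prop) :
    (prodAlg B).carrier → (prodAlg B).carrier → Prop :=
  fun x y => ∀ i, θ i (x i) (y i)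

/-- Maximal congruences: maximal elements of `(Con(A) \ {∇}, ⊆)`. -/
def IsMaxCon (A : Alg σ) (θ : A.carrier → A.carrier → Prop) : Prop :=
  A.IsCon θ ∧ θ ≠ A.nabla ∧
    ∀ ψ, A.IsCon ψ → ψ ≠ A.nabla → (∀ a b, θ a b → ψ a b) → ψ = θ

/-- Prime congruences. -/
def IsPrimeCon (A : Alg σ) (θ : A.carrier → A.carrier → Prop) : Prop :=
  A.IsCon θ ∧ ∀ α β, A.IsCon α → A.IsCon β →
    (∀ a b, α a b → β a b → θ a b) →
    (∀ a b, α a b → θ a b) ∨ ∀ a b, β a b → θ a b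

end Alg

/-!
In a congruence-permutable algebra the join of two congruences is their relational product, so
the factor congruences are exactly the complemented congruences and `φ ∘ ψ = ∇` says
`φ ∨ ψ = ∇`; quotients stay permutable, hence FCLP is CBLP and FC-normality is B-normality.

By the correspondence theorem `Con(A/θ)` is the interval `[θ, ∇]` of `Con(A)`. If `A` has CBLP
and `φ ∨ ψ = ∇`, then `φ/θ` and `ψ/θ` are complements in `Con(A/θ)` for `θ = φ ∩ ψ`; lifting
`φ/θ` to a complemented `ε` with `ε ∨ θ = φ`, the pair `(ε*, ε)` witnesses B-normality.
Conversely, a complemented pair of `Con(A/θ)` comes from `φ, ψ ⊇ θ` with `φ ∨ ψ = ∇` and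
`φ ∩ ψ = θ`; for the `α, β` that B-normality provides, distributivity gives `β ⊆ φ ⊆ θ ∨ β`,
so `β` lifts `φ/θ`.
-/

namespace Alg

variable {σ : Signature} {A : Alg σ}

theorem rel_ext {α : Type} {r s : α → α → Prop} (h : ∀ a b, r a b ↔ s a b) : r = s :=
  funext₂ fun a b => propext (h a b)

theorem isCon_nabla : A.IsCon A.nabla :=
  ⟨⟨fun _ => trivial, fun _ => trivial, fun _ _ => trivial⟩, fun _ _ _ _ => trivial⟩

theorem eq_nabla {r : A.carrier → A.carrier → Prop} (h : ∀ a b, r a b) : r = A.nabla :=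
  rel_ext fun a b => ⟨fun _ => trivial, fun _ => h a b⟩

theorem isCon_conMeet {r s} (hr : A.IsCon r) (hs : A.IsCon s) : A.IsCon (A.conMeet r s) :=
  ⟨⟨fun a => ⟨hr.1.refl a, hs.1.refl a⟩, fun h => ⟨hr.1.symm h.1, hs.1.symm h.2⟩,
    fun h h' => ⟨hr.1.trans h.1 h'.1, hs.1.trans h.2 h'.2⟩⟩,
   fun f x y h => ⟨hr.2 f x y fun i => (h i).1, hs.2 f x y fun i => (h i).2⟩⟩

theorem conMeet_comm {r s} : A.conMeet r s = A.conMeet s r :=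
  rel_ext fun _ _ => and_comm

theorem isCon_conJoin {r s} : A.IsCon (A.conJoin r s) :=
  ⟨⟨fun a _ ht _ _ => ht.1.refl a,
    fun h t ht hr hs => ht.1.symm (h t ht hr hs),
    fun h h' t ht hr hs => ht.1.trans (h t ht hr hs) (h' t ht hr hs)⟩,
   fun f x y h t ht hr hs => ht.2 f x y fun i => h i t ht hr hs⟩

theorem le_conJoin_left {r s} : r ≤ A.conJoin r s :=
  fun a b h _ _ hr _ => hr a b h

theorem le_conJoin_right {r s} : s ≤ A.conJoin r s :=
  fun a b h _ _ _ hs => hs a b h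

theorem conJoin_le {r s t} (ht : A.IsCon t) (hr : r ≤ t) (hs : s ≤ t) : A.conJoin r s ≤ t :=
  fun _ _ h => h t ht hr hs

theorem conJoin_comm {r s} : A.conJoin r s = A.conJoin s r :=
  rel_ext fun _ _ => ⟨fun h t ht hs hr => h t ht hr hs, fun h t ht hr hs => h t ht hs hr⟩

theorem eq_nabla_of_conJoin_eq_nabla {r s t} (h : A.conJoin r s = A.nabla) (ht : A.IsCon t)
    (hr : r ≤ t) (hs : s ≤ t) : t = A.nabla :=
  eq_nabla fun a b => conJoin_le ht hr hs a b (by rw [h]; trivial)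

theorem isCon_comp {r s} (hr : A.IsCon r) (hs : A.IsCon s) (hc : A.comp r s = A.comp s r) :
    A.IsCon (A.comp r s) := by
  refine ⟨⟨fun a => ⟨a, hs.1.refl a, hr.1.refl a⟩, ?_, ?_⟩, ?_⟩
  · rintro a b ⟨x, hax, hxb⟩
    rw [hc]
    exact ⟨x, hr.1.symm hxb, hs.1.symm hax⟩
  · rintro a b c ⟨x, hax, hxb⟩ ⟨y, hby, hyc⟩
    obtain ⟨z, hxz, hzy⟩ : A.comp r s x y := by rw [hc]; exact ⟨b, hxb, hby⟩
    exact ⟨z, hs.1.trans hax hxz, hr.1.trans hzy hyc⟩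
  · intro f x y h
    choose w h1 h2 using h
    exact ⟨A.interp f w, hs.2 f x w h1, hr.2 f w y h2⟩

theorem conJoin_eq_comp {r s} (hr : A.IsCon r) (hs : A.IsCon s)
    (hc : A.comp r s = A.comp s r) : A.conJoin r s = A.comp r s := by
  refine le_antisymm (conJoin_le (isCon_comp hr hs hc) ?_ ?_) ?_
  · exact fun x y hxy => ⟨x, hs.1.refl x, hxy⟩
  · exact fun x y hxy => ⟨y, hxy, hr.1.refl y⟩
  · rintro a b ⟨x, hax, hxb⟩
    exact isCon_conJoin.1.trans (le_conJoin_right a x hax) (le_conJoin_left x b hxb)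

theorem CongPermutable.conJoin_eq_comp (hp : A.CongPermutable) {r s} (hr : A.IsCon r)
    (hs : A.IsCon s) : A.conJoin r s = A.comp r s :=
  Alg.conJoin_eq_comp hr hs (hp r s hr hs)

theorem CongPermutable.isFC_iff_isBooleanCon (hp : A.CongPermutable)
    (φ : A.carrier → A.carrier → Prop) : A.IsFC φ ↔ A.IsBooleanCon φ :=
  ⟨fun ⟨h1, ψ, h2, h3, h4, _⟩ => ⟨h1, ψ, h2, h3, h4⟩,
   fun ⟨h1, ψ, h2, h3, h4⟩ => ⟨h1, ψ, h2, h3, h4, hp _ _ h1 h2⟩⟩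

theorem CongDistrib.le_of_disjoint_of_codisjoint (hd : A.CongDistrib) {α β φ}
    (hα : A.IsCon α) (hβ : A.IsCon β) (hφ : A.IsCon φ) (hm : A.conMeet α β = A.delta)
    (hj : A.conJoin φ α = A.nabla) : β ≤ φ := by
  intro a b hab
  have h : A.conMeet β (A.conJoin φ α) a b := ⟨hab, by rw [hj]; trivial⟩
  rw [hd β φ α hβ hφ hα] at h
  refine conJoin_le hφ (fun _ _ h => h.2) (fun x y hxy => ?_) a b h
  have hyx : A.conMeet α β x y := ⟨hxy.2, hxy.1⟩
  rw [hm] at hyx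
  obtain rfl : x = y := hyx
  exact hφ.1.refl x

theorem CongDistrib.le_conJoin_conMeet (hd : A.CongDistrib) {φ ψ β} (hφ : A.IsCon φ)
    (hψ : A.IsCon ψ) (hβ : A.IsCon β) (hj : A.conJoin ψ β = A.nabla) :
    φ ≤ A.conJoin (A.conMeet φ ψ) β := by
  intro a b hab
  have h : A.conMeet φ (A.conJoin ψ β) a b := ⟨hab, by rw [hj]; trivial⟩
  rw [hd φ ψ β hφ hψ hβ] at h
  exact conJoin_le isCon_conJoin le_conJoin_left
    (fun x y hxy => le_conJoin_right x y hxy.2) a b h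

section Correspondence

variable {θ : A.carrier → A.carrier → Prop}

theorem mk_eq_mk_iff (hθ : A.IsCon θ) {a b : A.carrier} :
    Quot.mk θ a = Quot.mk θ b ↔ θ a b := by
  rw [Quot.eq]
  exact hθ.1.eqvGen_iff

theorem quotAlg_interp_mk (hθ : A.IsCon θ) (f : σ.ops) (a : Fin (σ.arity f) → A.carrier) :
    (A.quotAlg θ).interp f (fun i => Quot.mk θ (a i)) = Quot.mk θ (A.interp f a) :=
  Quot.sound (hθ.2 f _ _ fun _ => (mk_eq_mk_iff hθ).mp (Quot.out_eq _))

def liftRel (A : Alg σ) (θ : A.carrier → A.carrier → Prop) (γ : Quot θ → Quot θ → Prop) :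
    A.carrier → A.carrier → Prop :=
  fun a b => γ (Quot.mk θ a) (Quot.mk θ b)

theorem isCon_liftRel {γ} (hθ : A.IsCon θ) (hγ : (A.quotAlg θ).IsCon γ) :
    A.IsCon (A.liftRel θ γ) := by
  refine ⟨⟨fun a => hγ.1.refl _, hγ.1.symm, hγ.1.trans⟩, fun f x y h => ?_⟩
  have := hγ.2 f (fun i => Quot.mk θ (x i)) (fun i => Quot.mk θ (y i)) h
  rwa [quotAlg_interp_mk hθ, quotAlg_interp_mk hθ] at this

theorem le_liftRel {γ} (hγ : (A.quotAlg θ).IsCon γ) : θ ≤ A.liftRel θ γ := by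
  intro a b h
  change γ _ _
  rw [Quot.sound h]
  exact hγ.1.refl _

theorem quotRel_liftRel (γ : Quot θ → Quot θ → Prop) : A.quotRel θ (A.liftRel θ γ) = γ := by
  refine rel_ext fun x y => ⟨fun ⟨a, b, hx, hy, h⟩ => hx ▸ hy ▸ h, fun h => ?_⟩
  induction x using Quot.ind with | mk a => ?_
  induction y using Quot.ind with | mk b => ?_
  exact ⟨a, b, rfl, rfl, h⟩

theorem quotRel_mk_mk_iff {φ} (hθ : A.IsCon θ) (hφ : A.IsCon φ) (hθφ : θ ≤ φ)
    {a b : A.carrier} : A.quotRel θ φ (Quot.mk θ a) (Quot.mk θ b) ↔ φ a b := by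
  refine ⟨fun ⟨a', b', ha, hb, h⟩ => ?_, fun h => ⟨a, b, rfl, rfl, h⟩⟩
  have haa : φ a a' := hθφ _ _ ((mk_eq_mk_iff hθ).mp ha)
  have hbb : φ b' b := hθφ _ _ ((mk_eq_mk_iff hθ).mp hb.symm)
  exact hφ.1.trans (hφ.1.trans haa h) hbb

theorem quotRel_inj {φ ψ} (hθ : A.IsCon θ) (hφ : A.IsCon φ) (hψ : A.IsCon ψ) (hθφ : θ ≤ φ)
    (hθψ : θ ≤ ψ) (h : A.quotRel θ φ = A.quotRel θ ψ) : φ = ψ := by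
  refine rel_ext fun a b => ?_
  rw [← quotRel_mk_mk_iff hθ hφ hθφ, h, quotRel_mk_mk_iff hθ hψ hθψ]

theorem isCon_quotRel {φ} (hθ : A.IsCon θ) (hφ : A.IsCon φ) (hθφ : θ ≤ φ) :
    (A.quotAlg θ).IsCon (A.quotRel θ φ) := by
  refine ⟨⟨fun x => ?_, ?_, ?_⟩, fun f x y h => ?_⟩
  · induction x using Quot.ind with | mk a => exact ⟨a, a, rfl, rfl, hφ.1.refl a⟩
  · rintro x y ⟨a, b, rfl, rfl, h⟩
    exact ⟨b, a, rfl, rfl, hφ.1.symm h⟩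
  · rintro x y z ⟨a, b, rfl, rfl, hab⟩ ⟨b', c, hb, rfl, hbc⟩
    refine ⟨a, c, rfl, rfl, hφ.1.trans (hφ.1.trans hab ?_) hbc⟩
    exact hθφ _ _ ((mk_eq_mk_iff hθ).mp hb)
  · choose a b hxa hyb hab using h
    rw [funext hxa, funext hyb, quotAlg_interp_mk hθ, quotAlg_interp_mk hθ]
    exact ⟨_, _, rfl, rfl, hφ.2 f a b hab⟩

theorem quotRel_self (hθ : A.IsCon θ) : A.quotRel θ θ = (A.quotAlg θ).delta := by
  refine rel_ext fun x y => ⟨fun ⟨a, b, hx, hy, h⟩ => hx ▸ hy ▸ Quot.sound h, ?_⟩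
  rintro rfl
  induction x using Quot.ind with | mk a => exact ⟨a, a, rfl, rfl, hθ.1.refl a⟩

theorem quotRel_nabla : A.quotRel θ A.nabla = (A.quotAlg θ).nabla := by
  rw [← quotRel_liftRel (A.quotAlg θ).nabla]
  rfl

theorem quotRel_conMeet {φ ψ} (hθ : A.IsCon θ) (hψ : A.IsCon ψ) (hθψ : θ ≤ ψ) :
    A.quotRel θ (A.conMeet φ ψ) = (A.quotAlg θ).conMeet (A.quotRel θ φ) (A.quotRel θ ψ) := by
  refine rel_ext fun x y => ⟨fun ⟨a, b, hx, hy, h1, h2⟩ => ⟨⟨a, b, hx, hy, h1⟩, ⟨a, b, hx, hy, h2⟩⟩,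
    ?_⟩
  rintro ⟨⟨a, b, rfl, rfl, h1⟩, h2⟩
  exact ⟨a, b, rfl, rfl, h1, (quotRel_mk_mk_iff hθ hψ hθψ).mp h2⟩

theorem quotRel_comp {φ ψ} (hθ : A.IsCon θ) (hφ : A.IsCon φ) (hθφ : θ ≤ φ) :
    A.quotRel θ (A.comp φ ψ) = (A.quotAlg θ).comp (A.quotRel θ φ) (A.quotRel θ ψ) := by
  refine rel_ext fun x y => ⟨fun ⟨a, b, hx, hy, w, h1, h2⟩ =>
    ⟨Quot.mk θ w, ⟨a, w, hx, rfl, h1⟩, ⟨w, b, rfl, hy, h2⟩⟩, ?_⟩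
  rintro ⟨z, ⟨a, w, rfl, rfl, h1⟩, ⟨w', b, hw, rfl, h2⟩⟩
  exact ⟨a, b, rfl, rfl, w, h1, (quotRel_mk_mk_iff hθ hφ hθφ).mp ⟨w', b, hw, rfl, h2⟩⟩

theorem quotRel_conJoin {φ ψ} (hθ : A.IsCon θ) (hθφ : θ ≤ φ) :
    A.quotRel θ (A.conJoin φ ψ) = (A.quotAlg θ).conJoin (A.quotRel θ φ) (A.quotRel θ ψ) := by
  refine le_antisymm ?_ (conJoin_le (isCon_quotRel hθ isCon_conJoin ?_) ?_ ?_)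
  · rintro _ _ ⟨a, b, rfl, rfl, h⟩
    refine conJoin_le (isCon_liftRel hθ isCon_conJoin) ?_ ?_ a b h
    · exact fun x y hxy => le_conJoin_left _ _ ⟨x, y, rfl, rfl, hxy⟩
    · exact fun x y hxy => le_conJoin_right _ _ ⟨x, y, rfl, rfl, hxy⟩
  · exact fun x y hxy => le_conJoin_left x y (hθφ x y hxy)
  · exact fun _ _ ⟨a, b, hx, hy, h⟩ => ⟨a, b, hx, hy, le_conJoin_left a b h⟩
  · exact fun _ _ ⟨a, b, hx, hy, h⟩ => ⟨a, b, hx, hy, le_conJoin_right a b h⟩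

theorem CongPermutable.quotAlg (hp : A.CongPermutable) (hθ : A.IsCon θ) :
    (A.quotAlg θ).CongPermutable := by
  intro γ δ hγ hδ
  rw [← quotRel_liftRel γ, ← quotRel_liftRel δ,
    ← quotRel_comp hθ (isCon_liftRel hθ hγ) (le_liftRel hγ),
    ← quotRel_comp hθ (isCon_liftRel hθ hδ) (le_liftRel hδ),
    hp _ _ (isCon_liftRel hθ hγ) (isCon_liftRel hθ hδ)]

theorem isBooleanCon_quotRel_conMeet {φ ψ} (hφ : A.IsCon φ) (hψ : A.IsCon ψ)
    (hj : A.conJoin φ ψ = A.nabla) :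
    (A.quotAlg (A.conMeet φ ψ)).IsBooleanCon (A.quotRel (A.conMeet φ ψ) φ) := by
  have hθ := isCon_conMeet hφ hψ
  refine ⟨isCon_quotRel hθ hφ fun _ _ h => h.1, _, isCon_quotRel hθ hψ fun _ _ h => h.2, ?_, ?_⟩
  · rw [← quotRel_conJoin hθ fun _ _ h => h.1, hj, quotRel_nabla]
  · rw [← quotRel_conMeet hθ hψ fun _ _ h => h.2, quotRel_self hθ]

theorem exists_lift_of_isBooleanCon {γ} (hθ : A.IsCon θ) (hγ : (A.quotAlg θ).IsBooleanCon γ) :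
    ∃ φ ψ, A.IsCon φ ∧ A.IsCon ψ ∧ θ ≤ φ ∧ A.conJoin φ ψ = A.nabla ∧
      A.conMeet φ ψ ≤ θ ∧ A.quotRel θ φ = γ := by
  obtain ⟨hγc, γ', hγ'c, hj, hm⟩ := hγ
  have hφ := isCon_liftRel hθ hγc
  have hψ := isCon_liftRel hθ hγ'c
  refine ⟨_, _, hφ, hψ, le_liftRel hγc, ?_, fun a b h => ?_, quotRel_liftRel γ⟩
  · refine quotRel_inj hθ isCon_conJoin isCon_nabla
      (fun a b h => le_conJoin_left a b (le_liftRel hγc a b h)) (fun _ _ _ => trivial) ?_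
    rw [quotRel_conJoin hθ (le_liftRel hγc), quotRel_liftRel γ, quotRel_liftRel γ', hj,
      quotRel_nabla]
  · have : (A.quotAlg θ).delta (Quot.mk θ a) (Quot.mk θ b) := by rw [← hm]; exact h
    exact (mk_eq_mk_iff hθ).mp this

end Correspondence

theorem algFCLP_iff_algCBLP (hp : A.CongPermutable) : A.AlgFCLP ↔ A.AlgCBLP :=
  forall₂_congr fun _ hθ => by
    simp only [HasFCLP, HasCBLP, hp.isFC_iff_isBooleanCon, (hp.quotAlg hθ).isFC_iff_isBooleanCon]

theorem fcNormal_iff_bNormal (hp : A.CongPermutable) : A.FCNormal ↔ A.BNormal := by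
  refine forall₄_congr fun φ ψ hφ hψ => ?_
  rw [hp.conJoin_eq_comp hφ hψ]
  refine imp_congr_right fun _ => exists₂_congr fun α β => ?_
  rw [hp.isFC_iff_isBooleanCon, hp.isFC_iff_isBooleanCon]
  refine and_congr_right fun hα => and_congr_right fun hβ => ?_
  rw [hp.conJoin_eq_comp hφ hα.1, hp.conJoin_eq_comp hψ hβ.1]

theorem bNormal_of_algCBLP (hc : A.AlgCBLP) : A.BNormal := by
  intro φ ψ hφ hψ hj
  have hθ := isCon_conMeet hφ hψ
  obtain ⟨ε, ⟨hε, ε', hε', hjε, hmε⟩, hlift⟩ :=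
    hc _ hθ _ (isBooleanCon_quotRel_conMeet hφ hψ hj)
  have hεφ : A.conJoin ε (A.conMeet φ ψ) = φ :=
    quotRel_inj hθ isCon_conJoin hφ le_conJoin_right (fun _ _ h => h.1) hlift
  have hφ_le : φ ≤ A.conJoin ψ ε := by
    rw [← hεφ]
    exact conJoin_le isCon_conJoin le_conJoin_right fun a b h => le_conJoin_left a b h.2
  refine ⟨ε', ε, ⟨hε', ε, hε, conJoin_comm.trans hjε, conMeet_comm.trans hmε⟩,
    ⟨hε, ε', hε', hjε, hmε⟩, conMeet_comm.trans hmε, ?_, ?_⟩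
  · refine eq_nabla_of_conJoin_eq_nabla hjε isCon_conJoin ?_ le_conJoin_right
    exact fun a b h => le_conJoin_left a b (hεφ ▸ le_conJoin_left a b h)
  · exact eq_nabla_of_conJoin_eq_nabla hj isCon_conJoin hφ_le le_conJoin_left

theorem algCBLP_of_bNormal (hd : A.CongDistrib) (hb : A.BNormal) : A.AlgCBLP := by
  intro θ hθ γ hγ
  obtain ⟨φ, ψ, hφ, hψ, hθφ, hj, hm, rfl⟩ := exists_lift_of_isBooleanCon hθ hγ
  obtain ⟨α, β, hα, hβ, hαβ, hφα, hψβ⟩ := hb φ ψ hφ hψ hj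
  have hβφ := hd.le_of_disjoint_of_codisjoint hα.1 hβ.1 hφ hαβ hφα
  have hφβ := hd.le_conJoin_conMeet hφ hψ hβ.1 hψβ
  have hφ_eq : φ = A.conJoin β θ := by
    refine le_antisymm (fun a b h => ?_) (conJoin_le hφ hβφ hθφ)
    rw [conJoin_comm]
    exact conJoin_le isCon_conJoin (hm.trans le_conJoin_left) le_conJoin_right a b (hφβ a b h)
  exact ⟨β, hβ, hφ_eq ▸ rfl⟩

end Alg

theorem stmt_10_general {σ : Signature} (A : Alg σ)
    (ha : A.Arithmetical) :
    [A.AlgFCLP, A.AlgCBLP, A.FCNormal, A.BNormal].TFAE := by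
  tfae_have 1 ↔ 2 := Alg.algFCLP_iff_algCBLP ha.2
  tfae_have 3 ↔ 4 := Alg.fcNormal_iff_bNormal ha.2
  tfae_have 2 → 4 := Alg.bNormal_of_algCBLP
  tfae_have 4 → 2 := Alg.algCBLP_of_bNormal ha.1
  tfae_finish

/-- For an arithmetical algebra the following are equivalent:
FCLP, CBLP, FC-normality, B-normality. -/
theorem stmt_10 {σ : Signature} (A : Alg σ) (hne : Nonempty A.carrier)
    (ha : A.Arithmetical) :
    [A.AlgFCLP, A.AlgCBLP, A.FCNormal, A.BNormal].TFAE :=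
  stmt_10_general A ha
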